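/- arXiv:2002.07144 — 2 statements merged into one kernel-verified Lean document; each statement's English description precedes it below -/
import Mathlib

section
/- For any functions f, g : X → X on a finite nonempty set X of size n, equality deg(f ∘ g) = √n · √(deg(f)) · deg(g) holds if and only if f is a constant function and g is a bijection. -/
/-!
Write `S h = ∑ y, |h⁻¹(y)|²`, so that `deg h = S h / n` and the claim reads
`S (f ∘ g) = √(S f) · S g`. Splitting each fibre of `f ∘ g` along `g` and applying
Cauchy–Schwarz fibrewise gives `S (f ∘ g) ≤ a · S g`, where `a` is the largest fibre of `f`;
since `a² ≤ S f`, the inequality `S (f ∘ g) ≤ √(S f) · S g` always holds, and equality forces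
`a² = S f`, i.e. `f` has a single nonempty fibre. Then `S (f ∘ g) = S f = n²`, so `S g = n`,
which happens exactly when every fibre of `g` has at most one point.
-/

/-- The degree of noninvertibility of `f : X → X`, as a real number. -/
noncomputable def degree {X : Type*} [Fintype X] [DecidableEq X] (f : X → X) : ℝ :=
  (∑ y : X, ((Finset.univ.filter fun x => f x = y).card : ℝ) ^ 2) / Fintype.card X

open Finset Function

section FiberSqSum

variable {α β γ : Type*} [Fintype α] [DecidableEq β] [DecidableEq γ]

lemma injective_iff_forall_card_fiber_le_one (h : α → β) :
    Injective h ↔ ∀ y, #{x | h x = y} ≤ 1 := by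
  refine ⟨fun hh y => card_le_one.2 fun a ha b hb => hh ?_, fun hle a b hab => ?_⟩
  · rw [(mem_filter.1 ha).2, (mem_filter.1 hb).2]
  · exact card_le_one.1 (hle (h b)) a (by simp [hab]) b (by simp)

variable [Fintype β]

def fiberSqSum (h : α → β) : ℕ := ∑ y, #{x | h x = y} ^ 2

lemma sum_card_fiber (h : α → β) : ∑ y, #{x | h x = y} = Fintype.card α :=
  (card_eq_sum_card_fiberwise fun x _ => mem_coe.2 (mem_univ (h x))).symm

lemma card_le_fiberSqSum (h : α → β) : Fintype.card α ≤ fiberSqSum h := by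
  rw [← sum_card_fiber h]
  exact sum_le_sum fun y _ => Nat.le_self_pow two_ne_zero _

lemma fiberSqSum_eq_card_iff (h : α → β) : fiberSqSum h = Fintype.card α ↔ Injective h := by
  rw [← sum_card_fiber h, fiberSqSum, eq_comm,
    sum_eq_sum_iff_of_le fun y _ => Nat.le_self_pow two_ne_zero _,
    injective_iff_forall_card_fiber_le_one]
  refine forall_congr' fun y => ?_
  simp only [mem_univ, true_implies]
  constructor <;> intro hy <;> nlinarith

lemma fiberSqSum_of_forall_eq {h : α → β} {c : β} (hc : ∀ x, h x = c) :
    fiberSqSum h = Fintype.card α ^ 2 := by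
  rw [fiberSqSum, sum_eq_single c]
  · simp [hc]
  · intro y _ hy
    simp [hc, Ne.symm hy]
  · simp

lemma forall_eq_of_fiberSqSum_le {h : α → β} {c : β} (hc : fiberSqSum h ≤ #{x | h x = c} ^ 2) :
    ∀ x, h x = c := by
  intro x
  by_contra hx
  have hpair : #{x' | h x' = h x} ^ 2 + #{x' | h x' = c} ^ 2 ≤ fiberSqSum h := by
    rw [← sum_pair hx (f := fun y => #{x | h x = y} ^ 2)]
    exact sum_le_sum_of_subset (subset_univ _)
  have hpos : 0 < #{x' | h x' = h x} ^ 2 := pow_pos (card_pos.2 ⟨x, by simp⟩) 2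
  omega

lemma card_fiber_comp (f : β → γ) (g : α → β) (z : γ) :
    #{x | f (g x) = z} = ∑ y with f y = z, #{x | g x = y} := by
  rw [sum_card_fiberwise_eq_card_filter]
  simp

variable [Fintype γ]

lemma fiberSqSum_comp_le {f : β → γ} {M : ℕ} (hM : ∀ z, #{y | f y = z} ≤ M) (g : α → β) :
    fiberSqSum (f ∘ g) ≤ M * fiberSqSum g :=
  calc fiberSqSum (f ∘ g) = ∑ z, (∑ y with f y = z, #{x | g x = y}) ^ 2 := by
        simp only [fiberSqSum, comp_apply, card_fiber_comp]
    _ ≤ ∑ z, #{y | f y = z} * ∑ y with f y = z, #{x | g x = y} ^ 2 :=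
        sum_le_sum fun z _ => sq_sum_le_card_mul_sum_sq
    _ ≤ ∑ z, M * ∑ y with f y = z, #{x | g x = y} ^ 2 := by gcongr with z; exact hM z
    _ = M * fiberSqSum g := by rw [← mul_sum, sum_fiberwise]; rfl

lemma exists_forall_eq_of_fiberSqSum_comp_sq_eq [Nonempty α] {f : β → γ} {g : α → β}
    (h : fiberSqSum (f ∘ g) ^ 2 = fiberSqSum f * fiberSqSum g ^ 2) : ∃ c, ∀ y, f y = c := by
  obtain ⟨c, -, hc⟩ := exists_max_image univ (fun z => #{y | f y = z})
    ⟨f (g (Classical.arbitrary α)), mem_univ _⟩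
  have hcomp := fiberSqSum_comp_le (fun z => hc z (mem_univ z)) g
  have hg : 0 < fiberSqSum g := Fintype.card_pos.trans_le (card_le_fiberSqSum g)
  have hle : fiberSqSum f * fiberSqSum g ^ 2 ≤ #{y | f y = c} ^ 2 * fiberSqSum g ^ 2 := by
    rw [← h, ← mul_pow]
    exact Nat.pow_le_pow_left hcomp 2
  exact ⟨c, forall_eq_of_fiberSqSum_le (Nat.le_of_mul_le_mul_right hle (by positivity))⟩

end FiberSqSum

theorem fiberSqSum_comp_sq_eq_iff {X : Type*} [Fintype X] [DecidableEq X] [Nonempty X]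
    (f g : X → X) :
    fiberSqSum (f ∘ g) ^ 2 = fiberSqSum f * fiberSqSum g ^ 2 ↔
      (∃ c, ∀ x, f x = c) ∧ Bijective g := by
  refine ⟨fun h => ?_, fun ⟨⟨c, hc⟩, hg⟩ => ?_⟩
  · obtain ⟨c, hc⟩ := exists_forall_eq_of_fiberSqSum_comp_sq_eq h
    rw [fiberSqSum_of_forall_eq hc, fiberSqSum_of_forall_eq (h := f ∘ g) fun x => hc (g x)] at h
    have hn : 0 < Fintype.card X ^ 2 := by positivity
    have hg : fiberSqSum g ^ 2 = Fintype.card X ^ 2 :=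
      (Nat.eq_of_mul_eq_mul_left hn (by rw [← h]; ring)).symm
    exact ⟨⟨c, hc⟩, ((fiberSqSum_eq_card_iff g).1
      (Nat.pow_left_injective two_ne_zero hg)).bijective_of_finite⟩
  · rw [fiberSqSum_of_forall_eq hc, fiberSqSum_of_forall_eq (h := f ∘ g) fun x => hc (g x),
      (fiberSqSum_eq_card_iff g).2 hg.1]
    ring

lemma degree_eq_fiberSqSum_div {X : Type*} [Fintype X] [DecidableEq X] (h : X → X) :
    degree h = fiberSqSum h / Fintype.card X := by
  simp [degree, fiberSqSum]

theorem deg_comp_eq_sqrt_mul_iff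
    {X : Type*} [Fintype X] [DecidableEq X] [Nonempty X] (f g : X → X) :
    degree (f ∘ g) =
        Real.sqrt (Fintype.card X) * Real.sqrt (degree f) * degree g ↔
      (∃ c : X, ∀ x : X, f x = c) ∧ Function.Bijective g := by
  have hn : (0 : ℝ) < Fintype.card X := Nat.cast_pos.2 Fintype.card_pos
  have hrhs : √(Fintype.card X : ℝ) * √(degree f) * degree g =
      √((fiberSqSum f * fiberSqSum g ^ 2 : ℕ) : ℝ) / Fintype.card X := by
    rw [degree_eq_fiberSqSum_div, degree_eq_fiberSqSum_div, ← Real.sqrt_mul hn.le,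
      mul_div_cancel₀ _ hn.ne', Nat.cast_mul, Real.sqrt_mul (Nat.cast_nonneg _), Nat.cast_pow,
      Real.sqrt_sq (Nat.cast_nonneg _), mul_div_assoc]
  rw [hrhs, degree_eq_fiberSqSum_div, div_left_inj' hn.ne', eq_comm,
    Real.sqrt_eq_iff_eq_sq (Nat.cast_nonneg _) (Nat.cast_nonneg _), ← fiberSqSum_comp_sq_eq_iff]
  exact_mod_cast eq_comm
end

section
/- For every permutation π of [n], the number of preimages of π under the bubble sort map B is 0 if π_n ≠ n, and equals 2^(ℓ−1) if π_n = n, where ℓ is the number of left-to-right maxima of π (entries j with e_j(π) = 0). -/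
/-- One step of bubble sort: compare the entries in positions `i` and `i+1`
(0-indexed) and swap them if they form a descent. -/
def bubbleStep (n : ℕ) (i : ℕ) (π : Equiv.Perm (Fin n)) : Equiv.Perm (Fin n) :=
  if h : i + 1 < n then
    if π ⟨i + 1, h⟩ < π ⟨i, Nat.lt_of_succ_lt h⟩ then
      π * Equiv.swap ⟨i, Nat.lt_of_succ_lt h⟩ ⟨i + 1, h⟩
    else π
  else π

/-- The bubble sort map `B = t_{n-1} ∘ ⋯ ∘ t_1`. -/
def bubbleSort (n : ℕ) (π : Equiv.Perm (Fin n)) : Equiv.Perm (Fin n) :=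
  (List.range (n - 1)).foldl (fun σ i => bubbleStep n i σ) π

/-- `invEntry n π j` is the entry `e_j(π)` of the inversion table of `π`. -/
def invEntry (n : ℕ) (π : Equiv.Perm (Fin n)) (j : Fin n) : ℕ :=
  (Finset.univ.filter fun i : Fin n => i < π.symm j ∧ j < π i).card

/-- The number of left-to-right maxima of `π`. -/
def lmax (n : ℕ) (π : Equiv.Perm (Fin n)) : ℕ :=
  (Finset.univ.filter fun j : Fin n => invEntry n π j = 0).card

/-!
After the first `k` steps of a pass, position `i < k` holds `min (max σ(0..i)) σ(i+1)`, position
`k` holds `max σ(0..k)` and later positions are untouched. Hence `B σ` ends in `n`, and before a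
position `q < n` it has one entry larger than `j` fewer than `σ` has up to `q` (none if `σ` has
none). At the position of `j` in `B σ` this says that every entry `e_j` of the inversion table (the
number of larger values to the left of `j`) drops by one under `B`, truncated at `0`. The inversion
table determines the permutation and its entries range independently over `0 ≤ e_j ≤ n - j`, so the
preimages of `π` correspond to the tables `f` with `f_j - 1 = e_j(π)`: one choice `e_j(π) + 1` when
`e_j(π) > 0` (admissible because `π` ends in `n`), two choices `0, 1` at every left-to-right maximum
other than `n`, and the single choice `0` at `n`.
-/

open Finset

section PrefixMax

variable {n : ℕ} (σ : Equiv.Perm (Fin n))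

def prefixMax (k : Fin n) : Fin n :=
  (Iic k).sup' nonempty_Iic σ

lemma le_prefixMax {i k : Fin n} (h : i ≤ k) : σ i ≤ prefixMax σ k :=
  le_sup' σ (mem_Iic.2 h)

lemma prefixMax_le_iff {k m : Fin n} : prefixMax σ k ≤ m ↔ ∀ i ≤ k, σ i ≤ m := by
  simp [prefixMax]

lemma lt_prefixMax_iff {k m : Fin n} : m < prefixMax σ k ↔ ∃ i ≤ k, m < σ i := by
  simp [prefixMax]

lemma exists_apply_eq_prefixMax (k : Fin n) : ∃ i ≤ k, σ i = prefixMax σ k := by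
  obtain ⟨i, hi, h⟩ := exists_mem_eq_sup' (nonempty_Iic (a := k)) σ
  exact ⟨i, mem_Iic.1 hi, h.symm⟩

lemma prefixMax_mono {k l : Fin n} (h : k ≤ l) : prefixMax σ k ≤ prefixMax σ l :=
  (prefixMax_le_iff σ).2 fun _ hi => le_prefixMax σ (hi.trans h)

lemma prefixMax_zero (σ : Equiv.Perm (Fin (n + 1))) : prefixMax σ 0 = σ 0 :=
  le_antisymm ((prefixMax_le_iff σ).2 fun i hi => by rw [Fin.le_zero_iff.1 hi])
    (le_prefixMax σ le_rfl)

lemma prefixMax_succ (σ : Equiv.Perm (Fin (n + 1))) (k : Fin n) :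
    prefixMax σ k.succ = max (prefixMax σ k.castSucc) (σ k.succ) := by
  refine le_antisymm ((prefixMax_le_iff σ).2 fun i hi => ?_)
    (max_le (prefixMax_mono σ k.castSucc_lt_succ.le) (le_prefixMax σ le_rfl))
  rcases hi.lt_or_eq with hi | rfl
  · exact le_max_of_le_left (le_prefixMax σ (Fin.le_castSucc_iff.2 hi))
  · exact le_max_right _ _

lemma prefixMax_last (σ : Equiv.Perm (Fin (n + 1))) : prefixMax σ (Fin.last n) = Fin.last n :=
  le_antisymm (Fin.le_last _) <| by
    simpa using le_prefixMax σ (Fin.le_last (σ.symm (Fin.last n)))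

end PrefixMax

section BubbleSortFormula

variable {n : ℕ}

def bubbleSteps (n k : ℕ) (σ : Equiv.Perm (Fin n)) : Equiv.Perm (Fin n) :=
  (List.range k).foldl (fun σ i => bubbleStep n i σ) σ

lemma bubbleSteps_succ (k : ℕ) (σ : Equiv.Perm (Fin n)) :
    bubbleSteps n (k + 1) σ = bubbleStep n k (bubbleSteps n k σ) := by
  simp [bubbleSteps, List.range_succ]

variable (τ : Equiv.Perm (Fin (n + 1))) (k : Fin n)

lemma bubbleStep_eq : bubbleStep (n + 1) k τ =
    if τ k.succ < τ k.castSucc then τ * Equiv.swap k.castSucc k.succ else τ := by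
  rw [bubbleStep, dif_pos (Nat.succ_lt_succ k.isLt)]
  rfl

lemma bubbleStep_apply_castSucc :
    bubbleStep (n + 1) k τ k.castSucc = min (τ k.castSucc) (τ k.succ) := by
  rw [bubbleStep_eq]
  split_ifs with h
  · simp [min_eq_right h.le]
  · simp [min_eq_left (not_lt.1 h)]

lemma bubbleStep_apply_succ :
    bubbleStep (n + 1) k τ k.succ = max (τ k.castSucc) (τ k.succ) := by
  rw [bubbleStep_eq]
  split_ifs with h
  · simp [max_eq_left h.le]
  · simp [max_eq_right (not_lt.1 h)]

lemma bubbleStep_apply_of_ne {x : Fin (n + 1)} (h₁ : x ≠ k.castSucc) (h₂ : x ≠ k.succ) :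
    bubbleStep (n + 1) k τ x = τ x := by
  rw [bubbleStep_eq]
  split_ifs
  · simp [Equiv.swap_apply_of_ne_of_ne h₁ h₂]
  · rfl

lemma bubbleSteps_apply (σ : Equiv.Perm (Fin (n + 1))) {k : ℕ} (hk : k ≤ n) :
    (∀ i : Fin n, (i : ℕ) < k →
      bubbleSteps (n + 1) k σ i.castSucc = min (prefixMax σ i.castSucc) (σ i.succ)) ∧
    (∀ x : Fin (n + 1), (x : ℕ) = k → bubbleSteps (n + 1) k σ x = prefixMax σ x) ∧
    (∀ x : Fin (n + 1), k < x → bubbleSteps (n + 1) k σ x = σ x) := by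
  induction k with
  | zero =>
    refine ⟨fun i hi => absurd hi i.val.not_lt_zero, fun x hx => ?_, fun x _ => rfl⟩
    rw [show x = 0 from Fin.ext hx, prefixMax_zero]
    rfl
  | succ k ih =>
    obtain ⟨hbefore, hat, hafter⟩ := ih (by omega)
    obtain ⟨κ, rfl⟩ : ∃ κ : Fin n, (κ : ℕ) = k := ⟨⟨k, by omega⟩, rfl⟩
    have hκ : bubbleSteps (n + 1) κ σ κ.castSucc = prefixMax σ κ.castSucc := hat _ rfl
    have hκ' : bubbleSteps (n + 1) κ σ κ.succ = σ κ.succ := hafter _ (by simp)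
    rw [bubbleSteps_succ]
    refine ⟨fun i hi => ?_, fun x hx => ?_, fun x hx => ?_⟩
    · obtain rfl | hne := eq_or_ne i κ
      · rw [bubbleStep_apply_castSucc, hκ, hκ']
      · have hik : i < κ := by grind [Fin.ext_iff]
        rw [bubbleStep_apply_of_ne _ _ (by simp [Fin.ext_iff]; omega)
          (by simp [Fin.ext_iff]; omega)]
        exact hbefore i hik
    · rw [show x = κ.succ from Fin.ext hx, bubbleStep_apply_succ, hκ, hκ', prefixMax_succ]
    · rw [bubbleStep_apply_of_ne _ _ (by simp [Fin.ext_iff]; omega)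
        (by simp [Fin.ext_iff]; omega)]
      exact hafter x (by omega)

lemma bubbleSort_apply_castSucc (σ : Equiv.Perm (Fin (n + 1))) (k : Fin n) :
    bubbleSort (n + 1) σ k.castSucc = min (prefixMax σ k.castSucc) (σ k.succ) :=
  (bubbleSteps_apply σ le_rfl).1 k k.isLt

lemma bubbleSort_apply_last (σ : Equiv.Perm (Fin (n + 1))) :
    bubbleSort (n + 1) σ (Fin.last n) = Fin.last n :=
  ((bubbleSteps_apply σ le_rfl).2.1 _ rfl).trans (prefixMax_last σ)

end BubbleSortFormula

lemma card_filter_Iic_eq {α : Type*} [LinearOrder α] [LocallyFiniteOrderBot α] (p : α → Prop)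
    [DecidablePred p] (a : α) :
    #{x ∈ Iic a | p x} = #{x ∈ Iio a | p x} + if p a then 1 else 0 := by
  rw [← Iio_insert, filter_insert]
  split_ifs <;> simp

lemma Fin.Iio_succ_eq_Iic_castSucc {n : ℕ} (k : Fin n) : Iio k.succ = Iic k.castSucc := by
  ext; simp [Fin.le_castSucc_iff]

section InvEntry

variable {n : ℕ}

lemma invEntry_eq_card_Iio (π : Equiv.Perm (Fin n)) (j : Fin n) :
    invEntry n π j = #{i ∈ Iio (π.symm j) | j < π i} := by
  rw [invEntry]
  congr 1
  ext i
  simp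

lemma invEntry_eq_card_symm (π : Equiv.Perm (Fin n)) (j : Fin n) :
    invEntry n π j = #{v | j < v ∧ π.symm v < π.symm j} :=
  card_equiv π fun i => by simp [and_comm]

lemma invEntry_lt (π : Equiv.Perm (Fin n)) (j : Fin n) : invEntry n π j < n - j := by
  have : #{v | j < v ∧ π.symm v < π.symm j} ≤ #(Ioi j) :=
    card_le_card fun v hv => by simp_all
  rw [Fin.card_Ioi] at this
  rw [invEntry_eq_card_symm]
  omega

lemma invEntry_last (π : Equiv.Perm (Fin (n + 1))) : invEntry (n + 1) π (Fin.last n) = 0 := by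
  simpa using invEntry_lt π (Fin.last n)

lemma invEntry_lt_of_apply_last (π : Equiv.Perm (Fin (n + 1))) (h : π (Fin.last n) = Fin.last n)
    {j : Fin (n + 1)} (hj : j ≠ Fin.last n) : invEntry (n + 1) π j < n - j := by
  have hsymm : π.symm (Fin.last n) = Fin.last n := by simp [Equiv.symm_apply_eq, h]
  have : #{v | j < v ∧ π.symm v < π.symm j} ≤ #((Ioi j).erase (Fin.last n)) :=
    card_le_card fun v hv => by
      simp only [mem_filter, mem_univ, true_and] at hv
      refine mem_erase.2 ⟨fun hv' => ?_, mem_Ioi.2 hv.1⟩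
      rw [hv', hsymm] at hv
      exact not_lt.2 (Fin.le_last _) hv.2
  rw [card_erase_of_mem (mem_Ioi.2 (Fin.lt_last_iff_ne_last.2 hj)), Fin.card_Ioi] at this
  rw [invEntry_eq_card_symm]
  have := Fin.val_lt_last hj
  omega

end InvEntry

section BubbleSortInvEntry

variable {n : ℕ} (σ : Equiv.Perm (Fin (n + 1)))

lemma card_filter_Iio_lt_bubbleSort (j m : Fin (n + 1)) :
    #{i ∈ Iio m | j < bubbleSort (n + 1) σ i} = #{i ∈ Iic m | j < σ i} - 1 := by
  induction m using Fin.induction with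
  | zero =>
    have : #{i ∈ Iic (0 : Fin (n + 1)) | j < σ i} ≤ 1 :=
      (card_filter_le _ _).trans (by simp)
    have hIio : Iio (0 : Fin (n + 1)) = ∅ := by ext; simp
    simp only [hIio, filter_empty, card_empty]
    omega
  | succ k ih =>
    have hmax : j < prefixMax σ k.castSucc ↔ 0 < #{i ∈ Iic k.castSucc | j < σ i} := by
      simp [lt_prefixMax_iff, card_pos, Finset.Nonempty]
    rw [Fin.Iio_succ_eq_Iic_castSucc, card_filter_Iic_eq, ih, bubbleSort_apply_castSucc,
      card_filter_Iic_eq _ k.succ, Fin.Iio_succ_eq_Iic_castSucc]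
    simp only [lt_min_iff, hmax]
    split_ifs <;> omega

lemma card_filter_Iic_lt_eq_invEntry {k : Fin n} {j : Fin (n + 1)}
    (h : bubbleSort (n + 1) σ k.castSucc = j) :
    #{i ∈ Iic k.castSucc | j < σ i} = invEntry (n + 1) σ j := by
  rw [bubbleSort_apply_castSucc] at h
  rw [invEntry_eq_card_Iio]
  rcases min_choice (prefixMax σ k.castSucc) (σ k.succ) with hmin | hmin <;> rw [hmin] at h
  · obtain ⟨p, hp, hpj⟩ := exists_apply_eq_prefixMax σ k.castSucc
    have hle : ∀ i ≤ k.castSucc, ¬ j < σ i := fun i hi => not_lt.2 (h ▸ le_prefixMax σ hi)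
    have hpos : σ.symm j = p := by rw [Equiv.symm_apply_eq, hpj, h]
    rw [card_eq_zero.2 (filter_eq_empty_iff.2 fun i hi => hle i (mem_Iic.1 hi)),
      card_eq_zero.2 (filter_eq_empty_iff.2 fun i hi =>
        hle i ((mem_Iio.1 hi).le.trans (hpos ▸ hp)))]
  · rw [← h, Equiv.symm_apply_apply, Fin.Iio_succ_eq_Iic_castSucc]

theorem invEntry_bubbleSort (j : Fin (n + 1)) :
    invEntry (n + 1) (bubbleSort (n + 1) σ) j = invEntry (n + 1) σ j - 1 := by
  set τ := bubbleSort (n + 1) σ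
  obtain rfl | hj := eq_or_ne j (Fin.last n)
  · simp [invEntry_last]
  obtain ⟨k, hk⟩ : ∃ k : Fin n, k.castSucc = τ.symm j := by
    refine Fin.exists_castSucc_eq.2 fun h => hj ?_
    rw [← τ.apply_symm_apply j, h, bubbleSort_apply_last]
  rw [invEntry_eq_card_Iio, ← hk, card_filter_Iio_lt_bubbleSort,
    card_filter_Iic_lt_eq_invEntry σ (by rw [hk, τ.apply_symm_apply])]

end BubbleSortInvEntry

section LehmerCode

variable {α β : Type*} [LinearOrder α] [LinearOrder β]

lemma filter_lt_eq_of_card_eq {ι : Type*} [DecidableEq ι] {ρ : ι → α} {ρ' : ι → β}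
    (hρ' : Function.Injective ρ') {s : Finset ι} {a : ι} (ha : a ∉ s)
    (hord : ∀ v ∈ s, ∀ w ∈ s, ρ v < ρ w ↔ ρ' v < ρ' w)
    (hcard : #{v ∈ s | ρ v < ρ a} = #{v ∈ s | ρ' v < ρ' a}) :
    {v ∈ s | ρ v < ρ a} = {v ∈ s | ρ' v < ρ' a} := by
  refine eq_of_subset_of_card_le (fun w hw => ?_) hcard.ge
  by_contra hw'
  obtain ⟨hws, hwa⟩ := mem_filter.1 hw
  have hsub : {v ∈ s | ρ' v < ρ' a} ⊆ {v ∈ s | ρ v < ρ a}.erase w := by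
    intro v hv
    obtain ⟨hvs, hva⟩ := mem_filter.1 hv
    have haw : ρ' a < ρ' w := lt_of_le_of_ne (not_lt.1 fun h => hw' (mem_filter.2 ⟨hws, h⟩))
      (hρ'.ne fun h => ha (h ▸ hws))
    refine mem_erase.2 ⟨fun h => hw' (h ▸ hv), mem_filter.2 ⟨hvs, ?_⟩⟩
    exact ((hord v hvs w hws).2 (hva.trans haw)).trans hwa
  have := card_le_card hsub
  rw [card_erase_of_mem hw] at this
  have : 0 < #{v ∈ s | ρ v < ρ a} := card_pos.2 ⟨w, hw⟩
  omega

lemma lt_iff_lt_of_card_filter_eq {N : ℕ} {ρ : Fin N → α} {ρ' : Fin N → β}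
    (hρ : Function.Injective ρ) (hρ' : Function.Injective ρ')
    (h : ∀ j, #{v | j < v ∧ ρ v < ρ j} = #{v | j < v ∧ ρ' v < ρ' j}) (v w : Fin N) :
    ρ v < ρ w ↔ ρ' v < ρ' w := by
  induction N with
  | zero => exact v.elim0
  | succ N ih =>
    have hsucc : ∀ v w : Fin N, ρ v.succ < ρ w.succ ↔ ρ' v.succ < ρ' w.succ :=
      ih (hρ.comp (Fin.succ_injective _)) (hρ'.comp (Fin.succ_injective _)) fun j => by
        simpa [Fin.card_filter_univ_succ] using h j.succ
    -- The values above `0` that precede it form an initial segment, of size `e_0`, of the order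
    -- on nonzero values, which `ρ` and `ρ'` share by induction.
    have hbefore0 : ∀ w : Fin N, ρ w.succ < ρ 0 ↔ ρ' w.succ < ρ' 0 := by
      have hord : ∀ v ∈ Ioi 0, ∀ w ∈ Ioi 0, ρ v < ρ w ↔ ρ' v < ρ' w := by
        intro v hv w hw
        obtain ⟨v, rfl⟩ := Fin.exists_succ_eq.2 (mem_Ioi.1 hv).ne'
        obtain ⟨w, rfl⟩ := Fin.exists_succ_eq.2 (mem_Ioi.1 hw).ne'
        exact hsucc v w
      have hcard := h 0
      simp only [← filter_filter, filter_lt_eq_Ioi] at hcard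
      have := filter_lt_eq_of_card_eq hρ' (by simp) hord hcard
      intro w
      simpa using congrArg (w.succ ∈ ·) this
    induction v using Fin.cases <;> induction w using Fin.cases
    · simp
    · rw [← not_le, ← not_le, (hρ.ne (Fin.succ_ne_zero _)).le_iff_lt,
        (hρ'.ne (Fin.succ_ne_zero _)).le_iff_lt, hbefore0]
    · exact hbefore0 _
    · exact hsucc _ _

end LehmerCode

theorem invEntry_injective (N : ℕ) : Function.Injective (invEntry N) := by
  intro σ τ h
  have hord := lt_iff_lt_of_card_filter_eq σ.symm.injective τ.symm.injective fun j => by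
    rw [← invEntry_eq_card_symm, ← invEntry_eq_card_symm, h]
  have hmono : StrictMono (τ.symm ∘ σ) := fun x y hxy => (hord _ _).1 (by simpa using hxy)
  exact Equiv.ext fun x => (τ.symm_apply_eq.1 hmono.apply_eq)

theorem image_invEntry (N : ℕ) :
    univ.image (invEntry N) = Fintype.piFinset fun j : Fin N => range (N - j) := by
  refine eq_of_subset_of_card_le (fun f hf => ?_) ?_
  · obtain ⟨σ, -, rfl⟩ := mem_image.1 hf
    simpa [Fintype.mem_piFinset] using invEntry_lt σ
  · rw [card_image_of_injective _ (invEntry_injective N), Fintype.card_piFinset]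
    simp only [card_range, card_univ, Fintype.card_perm, Fintype.card_fin]
    rw [Fin.prod_univ_eq_prod_range (N - ·), ← Nat.descFactorial_eq_prod_range,
      Nat.descFactorial_self]

lemma bubbleSort_eq_iff {n : ℕ} (σ π : Equiv.Perm (Fin (n + 1))) :
    bubbleSort (n + 1) σ = π ↔ ∀ j, invEntry (n + 1) σ j - 1 = invEntry (n + 1) π j := by
  rw [← (invEntry_injective _).eq_iff, funext_iff]
  simp only [invEntry_bubbleSort]

lemma card_bubbleSort_fiber_eq_prod {n : ℕ} (π : Equiv.Perm (Fin (n + 1))) :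
    #{σ | bubbleSort (n + 1) σ = π} =
      ∏ j : Fin (n + 1), #{x ∈ range (n + 1 - j) | x - 1 = invEntry (n + 1) π j} := by
  rw [filter_congr fun σ _ => bubbleSort_eq_iff σ π,
    ← card_image_of_injective _ (invEntry_injective _),
    ← filter_image (f := invEntry (n + 1)) (s := univ)
      (p := fun f => ∀ j, f j - 1 = invEntry (n + 1) π j),
    image_invEntry, ← Fintype.card_piFinset]
  congr 1
  ext f
  simp [Fintype.mem_piFinset, forall_and]

lemma card_filter_range_sub_one_eq_invEntry {n : ℕ} {π : Equiv.Perm (Fin (n + 1))}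
    (h : π (Fin.last n) = Fin.last n) (j : Fin (n + 1)) :
    #{x ∈ range (n + 1 - j) | x - 1 = invEntry (n + 1) π j} =
      if j ∈ ({i | invEntry (n + 1) π i = 0} : Finset _).erase (Fin.last n) then 2 else 1 := by
  obtain rfl | hj := eq_or_ne j (Fin.last n)
  · simp [invEntry_last, filter_singleton]
  have hjn : (j : ℕ) < n := Fin.val_lt_last hj
  by_cases he : invEntry (n + 1) π j = 0
  · rw [if_pos (by simp [he, hj])]
    have : {x ∈ range (n + 1 - j) | x - 1 = invEntry (n + 1) π j} = {0, 1} := by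
      ext x
      simp only [he, mem_filter, mem_range, mem_insert, mem_singleton]
      omega
    rw [this, card_pair zero_ne_one]
  · rw [if_neg (by simp [he])]
    have hlt := invEntry_lt_of_apply_last π h hj
    have : {x ∈ range (n + 1 - j) | x - 1 = invEntry (n + 1) π j} =
        {invEntry (n + 1) π j + 1} := by
      ext x
      simp only [mem_filter, mem_range, mem_singleton]
      omega
    rw [this, card_singleton]

/-- A permutation `π` of `[n]` has no preimages under bubble sort if its last
entry is not maximal, and `2^(lmax π − 1)` preimages if it is. -/
theorem card_bubbleSort_fiber (n : ℕ) (π : Equiv.Perm (Fin (n + 1))) :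
    (Finset.univ.filter fun σ : Equiv.Perm (Fin (n + 1)) =>
        bubbleSort (n + 1) σ = π).card =
      if π (Fin.last n) = Fin.last n then 2 ^ (lmax (n + 1) π - 1) else 0 := by
  split_ifs with h
  · rw [card_bubbleSort_fiber_eq_prod,
      prod_congr rfl fun j _ => card_filter_range_sub_one_eq_invEntry h j, prod_ite_mem,
      univ_inter, prod_const, card_erase_of_mem (by simp [invEntry_last])]
    rfl
  · rw [card_eq_zero, filter_eq_empty_iff]
    rintro σ - rfl
    exact h (bubbleSort_apply_last σ)
end
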